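/- Suppose the unique solution (W_1,…,W_N) of the window IFS is row-wise measure-disjoint and vol(W_i) = η·v_i for all i with some η > 0. Let f_i(y) = ∫_{W_i} exp(2πi⟨x,y⟩) dx and set R = Qᵀ. Then, with C(y) = lim_{n→∞} λ^{−n} B^{(n)}(y) (taken with this R), the vector |f(y)⟩ = (f_1(y),…,f_N(y)) satisfies |f(y)⟩ = C(y)·|f(0)⟩ = η·C(y)·|v⟩ for all y ∈ ℝ^m; equivalently, writing C(y) = |c(y)⟩⟨u|, one has |f(y)⟩ = η·|c(y)⟩ with |c(y)⟩ = C(y)|v⟩. -/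

import Mathlib

open MeasureTheory Filter Matrix Topology Set

/-!
Splitting `W i` along the IFS into the a.e. disjoint pieces `Q '' W j + t` and changing variables
(`|det Q| = λ⁻¹`, `⟨Q x + t, y⟩ = ⟨t, y⟩ + ⟨x, Qᵀ y⟩`) gives the renewal equation
`f(y) = λ⁻¹ B(y) f(Qᵀ y)`. Iterating it along the cocycle gives `f(y) = λ⁻ⁿ B⁽ⁿ⁾(y) f((Qᵀ)ⁿ y)`;
since `Qᵀ` is a contraction, `(Qᵀ)ⁿ y → 0`, and continuity of the Fourier transforms `f j` of the
finite-volume windows yields `f(y) = C(y) f(0)` in the limit, while `f(0) = vol(W) = η v`.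
-/

section PlaneWave

variable {E : Type*} [NormedAddCommGroup E] [InnerProductSpace ℝ E]

noncomputable def planeWave (y x : E) : ℂ :=
  Complex.exp (2 * Real.pi * Complex.I * ((inner ℝ x y : ℝ) : ℂ))

lemma norm_planeWave (y x : E) : ‖planeWave y x‖ = 1 := by
  simp [planeWave, Complex.norm_exp]

lemma planeWave_zero_left (x : E) : planeWave 0 x = 1 := by
  simp [planeWave]

lemma continuous_planeWave (y : E) : Continuous (planeWave y) := by
  unfold planeWave; fun_prop

lemma continuous_planeWave_left (x : E) : Continuous fun y : E => planeWave y x := by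
  unfold planeWave; fun_prop

lemma planeWave_affine [CompleteSpace E] (Q : E →L[ℝ] E) (t y x : E) :
    planeWave y (Q x + t) = planeWave y t * planeWave (ContinuousLinearMap.adjoint Q y) x := by
  simp only [planeWave, inner_add_left, ContinuousLinearMap.adjoint_inner_right,
    Complex.ofReal_add, mul_add, Complex.exp_add]
  ring

end PlaneWave

section SetFourier

variable {E : Type*} [NormedAddCommGroup E] [InnerProductSpace ℝ E] [MeasurableSpace E]
  (μ : Measure E)

noncomputable def setFourier (s : Set E) (y : E) : ℂ := ∫ x in s, planeWave y x ∂μ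

variable {μ}

lemma setFourier_zero (s : Set E) : setFourier μ s 0 = μ.real s := by
  simp [setFourier, planeWave_zero_left]

variable [BorelSpace E]

lemma integrableOn_planeWave {s : Set E} (hs : μ s ≠ ⊤) (y : E) :
    IntegrableOn (planeWave y) s μ :=
  Measure.integrableOn_of_bounded hs (continuous_planeWave y).aestronglyMeasurable
    (M := 1) (ae_of_all _ fun x => (norm_planeWave y x).le)

lemma continuous_setFourier {s : Set E} (hs : μ s ≠ ⊤) : Continuous (setFourier μ s) := by
  have : IsFiniteMeasure (μ.restrict s) := isFiniteMeasure_restrict.2 hs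
  exact continuous_of_dominated (fun y => (continuous_planeWave y).aestronglyMeasurable)
    (fun y => ae_of_all _ fun x => (norm_planeWave y x).le) (integrable_const 1)
    (ae_of_all _ continuous_planeWave_left)

lemma setFourier_iUnion {κ : Type*} [Fintype κ] {s : κ → Set E}
    (hm : ∀ k, NullMeasurableSet (s k) μ) (hd : Pairwise (Function.onFun (AEDisjoint μ) s))
    (hfin : ∀ k, μ (s k) ≠ ⊤) (y : E) :
    setFourier μ (⋃ k, s k) y = ∑ k, setFourier μ (s k) y := by
  rw [setFourier, integral_iUnion_ae hm hd
    (integrableOn_finite_iUnion.2 fun k => integrableOn_planeWave (hfin k) y), tsum_fintype]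
  rfl

lemma setFourier_image_affine [FiniteDimensional ℝ E] [μ.IsAddHaarMeasure] {Q : E →L[ℝ] E}
    (hQ : Function.Injective Q) {s : Set E} (hs : MeasurableSet s) (t y : E) :
    setFourier μ ((fun x => Q x + t) '' s) y
      = |Q.det| * planeWave y t * setFourier μ s (ContinuousLinearMap.adjoint Q y) := by
  rw [setFourier, integral_image_eq_integral_abs_det_fderiv_smul μ hs
    (fun x _ => (Q.hasFDerivAt.add_const t).hasFDerivWithinAt)
    (fun a _ b _ hab => hQ (add_right_cancel hab))]
  simp only [planeWave_affine, Complex.real_smul, integral_const_mul, setFourier]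
  ring

end SetFourier

section GraphDirectedIFS

variable {E : Type*} [NormedAddCommGroup E] [InnerProductSpace ℝ E] [FiniteDimensional ℝ E]
  [MeasurableSpace E] [BorelSpace E] {μ : Measure E} [μ.IsAddHaarMeasure]
  {ι : Type*} [Fintype ι]

noncomputable def fourierMatrix (T : ι → ι → Finset E) (y : E) : Matrix ι ι ℂ :=
  fun i j => ∑ x ∈ T i j, planeWave y x

lemma setFourier_renewal (T : ι → ι → Finset E) {Q : E →L[ℝ] E} (hQ : Function.Injective Q)
    {W : ι → Set E} (hWcp : ∀ i, IsCompact (W i))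
    (hIFS : ∀ i, W i = ⋃ j, ⋃ t ∈ T i j, (fun x => Q x + t) '' W j)
    (hdisj : ∀ i j j' : ι, ∀ t ∈ T i j, ∀ t' ∈ T i j', (j, t) ≠ (j', t') →
      μ (((fun x => Q x + t) '' W j) ∩ ((fun x => Q x + t') '' W j')) = 0)
    (y : E) :
    (fun i => setFourier μ (W i) y) =
      |Q.det| • (fourierMatrix T y *ᵥ
        fun j => setFourier μ (W j) (ContinuousLinearMap.adjoint Q y)) := by
  ext i
  let S : (Σ j, T i j) → Set E := fun p => (fun x => Q x + p.2) '' W p.1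
  have hcp : ∀ p, IsCompact (S p) := fun p => (hWcp p.1).image (by fun_prop)
  have hW : W i = ⋃ p, S p := by
    rw [hIFS i, Set.iUnion_sigma]
    simp only [S, Set.iUnion_subtype]
  have hS : Pairwise (Function.onFun (AEDisjoint μ) S) := by
    rintro ⟨j, t, ht⟩ ⟨j', t', ht'⟩ hne
    refine hdisj i j j' t ht t' ht' ?_
    rintro ⟨⟩
    exact hne rfl
  rw [hW, setFourier_iUnion (fun p => (hcp p).isClosed.measurableSet.nullMeasurableSet) hS
    (fun p => (hcp p).measure_lt_top.ne), Fintype.sum_sigma]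
  simp only [S, setFourier_image_affine hQ (hWcp _).isClosed.measurableSet, Pi.smul_apply,
    mulVec, dotProduct, fourierMatrix, Finset.sum_mul, Finset.mul_sum, Complex.real_smul,
    mul_assoc]
  exact Finset.sum_congr rfl fun j _ => by rw [← Finset.sum_coe_sort (T i j)]

end GraphDirectedIFS

section Cocycle

variable {X ι : Type*} [Fintype ι] [DecidableEq ι] {F : X → ι → ℂ} {A : X → X}
  {B : X → Matrix ι ι ℂ} {c : ℝ} {Bc : ℕ → X → Matrix ι ι ℂ}

lemma eq_cocycle_mulVec_iterate (hF : ∀ y, F y = c • (B y *ᵥ F (A y)))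
    (hBc0 : ∀ y, Bc 0 y = 1) (hBcS : ∀ n y, Bc (n + 1) y = B y * Bc n (A y)) (n : ℕ) (y : X) :
    F y = c ^ n • (Bc n y *ᵥ F (A^[n] y)) := by
  induction n generalizing y with
  | zero => simp [hBc0]
  | succ n ih =>
    rw [hF y, ih (A y), hBcS, Function.iterate_succ_apply, mulVec_smul, smul_smul, pow_succ',
      ← mulVec_mulVec]

lemma eq_mulVec_of_cocycle_tendsto [TopologicalSpace X] (hF : ∀ y, F y = c • (B y *ᵥ F (A y)))
    (hBc0 : ∀ y, Bc 0 y = 1) (hBcS : ∀ n y, Bc (n + 1) y = B y * Bc n (A y)) {y x₀ : X}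
    {C : Matrix ι ι ℂ} (hC : Tendsto (fun n => c ^ n • Bc n y) atTop (𝓝 C))
    (hA : Tendsto (fun n => A^[n] y) atTop (𝓝 x₀)) (hFx₀ : ContinuousAt F x₀) :
    F y = C *ᵥ F x₀ := by
  have hmulVec : Continuous fun p : Matrix ι ι ℂ × (ι → ℂ) => p.1 *ᵥ p.2 :=
    continuous_fst.matrix_mulVec continuous_snd
  have hFA : Tendsto (fun n => F (A^[n] y)) atTop (𝓝 (F x₀)) := hFx₀.tendsto.comp hA
  refine tendsto_nhds_unique (tendsto_const_nhds.congr fun n => ?_)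
    ((hmulVec.tendsto (C, F x₀)).comp (hC.prodMk_nhds hFA))
  rw [Function.comp_apply, smul_mulVec, ← eq_cocycle_mulVec_iterate hF hBc0 hBcS]

end Cocycle

lemma tendsto_iterate_nhds_zero_of_norm_lt_one {E : Type*} [NormedAddCommGroup E]
    [NormedSpace ℝ E] [CompleteSpace E] {A : E →L[ℝ] E} (hA : ‖A‖ < 1) (y : E) :
    Tendsto (fun n => A^[n] y) atTop (𝓝 0) := by
  have hcontr : ContractingWith ‖A‖₊ A := ⟨hA, A.lipschitz⟩
  rw [hcontr.fixedPoint_unique (map_zero A)]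
  exact hcontr.tendsto_iterate_fixedPoint y

theorem stmt11_general
    {N m : ℕ}
    (T : Fin N → Fin N → Finset (EuclideanSpace ℝ (Fin m)))
    (lam : ℝ)
    (v : Fin N → ℝ)
    (hvpos : ∀ i, 0 < v i)
    (B : EuclideanSpace ℝ (Fin m) → Matrix (Fin N) (Fin N) ℂ)
    (hB : ∀ y i j, B y i j =
      ∑ x ∈ T i j, Complex.exp (2 * Real.pi * Complex.I * ((inner ℝ x y : ℝ) : ℂ)))
    (Q : EuclideanSpace ℝ (Fin m) →L[ℝ] EuclideanSpace ℝ (Fin m))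
    (hQbij : Function.Bijective Q)
    (hQcontr : ‖Q‖ < 1)
    (hQdet : |Q.det| = 1 / lam)
    (W : Fin N → Set (EuclideanSpace ℝ (Fin m)))
    (hWcp : ∀ i, IsCompact (W i))
    (hIFS : ∀ i, W i = ⋃ j, ⋃ t ∈ T i j, (fun x => Q x + t) '' W j)
    (hdisj : ∀ i j j' : Fin N, ∀ t ∈ T i j, ∀ t' ∈ T i j', (j, t) ≠ (j', t') →
      volume (((fun x => Q x + t) '' W j) ∩ ((fun x => Q x + t') '' W j')) = 0)
    (η : ℝ) (hη : 0 < η)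
    (hvol : ∀ i, volume (W i) = ENNReal.ofReal (η * v i))
    (f : Fin N → EuclideanSpace ℝ (Fin m) → ℂ)
    (hf : ∀ i y, f i y =
      ∫ x in W i, Complex.exp (2 * Real.pi * Complex.I * ((inner ℝ x y : ℝ) : ℂ)))
    (Bc : ℕ → EuclideanSpace ℝ (Fin m) → Matrix (Fin N) (Fin N) ℂ)
    (hBc0 : ∀ y, Bc 0 y = 1)
    (hBcS : ∀ n y, Bc (n + 1) y =
      B y * Bc n (ContinuousLinearMap.adjoint Q y))
    (C : EuclideanSpace ℝ (Fin m) → Matrix (Fin N) (Fin N) ℂ)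
    (hC : ∀ y i j, Tendsto (fun n : ℕ => (lam ^ n)⁻¹ • Bc n y i j)
      atTop (𝓝 (C y i j))) :
    ∀ (y : EuclideanSpace ℝ (Fin m)) (i : Fin N),
      f i y = (C y).mulVec (fun j => f j 0) i ∧
      f i y = (η : ℂ) * (C y).mulVec (fun j => (v j : ℂ)) i := by
  obtain rfl : B = fourierMatrix T := funext fun y => Matrix.ext (hB y)
  obtain rfl : f = fun i => setFourier volume (W i) := funext fun i => funext (hf i)
  have hrenewal : ∀ y, (fun i => setFourier volume (W i) y) = lam⁻¹ • (fourierMatrix T y *ᵥ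
      fun j => setFourier volume (W j) (ContinuousLinearMap.adjoint Q y)) := by
    rw [← one_div, ← hQdet]
    exact setFourier_renewal T hQbij.injective hWcp hIFS hdisj
  have hlim : ∀ y, Tendsto (fun n => lam⁻¹ ^ n • Bc n y) atTop (𝓝 (C y)) := fun y =>
    tendsto_pi_nhds.2 fun i => tendsto_pi_nhds.2 fun j => by simpa [inv_pow] using hC y i j
  have hA : ‖ContinuousLinearMap.adjoint Q‖ < 1 := by
    rwa [ContinuousLinearMap.adjoint.norm_map]
  have hcont : ContinuousAt (fun y i => setFourier volume (W i) y) 0 :=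
    (continuous_pi fun i => continuous_setFourier (hWcp i).measure_lt_top.ne).continuousAt
  have hF0 : (fun j => setFourier volume (W j) 0) = (η : ℂ) • fun j => (v j : ℂ) := by
    ext j
    rw [setFourier_zero, Measure.real, hvol, ENNReal.toReal_ofReal (mul_pos hη (hvpos j)).le]
    simp
  intro y i
  have hy := congrFun (eq_mulVec_of_cocycle_tendsto hrenewal hBc0 hBcS (hlim y)
    (tendsto_iterate_nhds_zero_of_norm_lt_one hA y) hcont) i
  refine ⟨hy, hy.trans ?_⟩
  rw [hF0, mulVec_smul, Pi.smul_apply, smul_eq_mul]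

/-- with `f_i(y) = ∫_{W_i} e^{2πi⟨x,y⟩}dx` and the limit
`C(y) = lim λ⁻ⁿ B⁽ⁿ⁾(y)` (cocycle taken with `R = Qᵀ`), one has
`|f(y)⟩ = C(y)|f(0)⟩ = η·C(y)|v⟩`. -/
theorem stmt11
    {N m : ℕ} (hN : 1 ≤ N) (hm : 1 ≤ m)
    (T : Fin N → Fin N → Finset (EuclideanSpace ℝ (Fin m)))
    (M : Matrix (Fin N) (Fin N) ℝ)
    (hM : ∀ i j, M i j = (T i j).card)
    (hprim : ∃ k : ℕ, ∀ i j, 0 < (M ^ k) i j)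
    (lam : ℝ) (hlam : 1 < lam)
    (u v : Fin N → ℝ)
    (hu : M.vecMul u = lam • u) (hv : M.mulVec v = lam • v)
    (hupos : ∀ i, 0 < u i) (hvpos : ∀ i, 0 < v i)
    (hvsum : ∑ i, v i = 1) (huv : ∑ i, u i * v i = 1)
    (B : EuclideanSpace ℝ (Fin m) → Matrix (Fin N) (Fin N) ℂ)
    (hB : ∀ y i j, B y i j =
      ∑ x ∈ T i j, Complex.exp (2 * Real.pi * Complex.I * ((inner ℝ x y : ℝ) : ℂ)))
    (Q : EuclideanSpace ℝ (Fin m) →L[ℝ] EuclideanSpace ℝ (Fin m))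
    (hQbij : Function.Bijective Q)
    (hQcontr : ‖Q‖ < 1)
    (hQdet : |Q.det| = 1 / lam)
    (hQnormal : Q.comp (ContinuousLinearMap.adjoint Q) =
      (ContinuousLinearMap.adjoint Q).comp Q)
    (W : Fin N → Set (EuclideanSpace ℝ (Fin m)))
    (hWne : ∀ i, (W i).Nonempty) (hWcp : ∀ i, IsCompact (W i))
    (hIFS : ∀ i, W i = ⋃ j, ⋃ t ∈ T i j, (fun x => Q x + t) '' W j)
    (hdisj : ∀ i j j' : Fin N, ∀ t ∈ T i j, ∀ t' ∈ T i j', (j, t) ≠ (j', t') →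
      volume (((fun x => Q x + t) '' W j) ∩ ((fun x => Q x + t') '' W j')) = 0)
    (η : ℝ) (hη : 0 < η)
    (hvol : ∀ i, volume (W i) = ENNReal.ofReal (η * v i))
    (f : Fin N → EuclideanSpace ℝ (Fin m) → ℂ)
    (hf : ∀ i y, f i y =
      ∫ x in W i, Complex.exp (2 * Real.pi * Complex.I * ((inner ℝ x y : ℝ) : ℂ)))
    (Bc : ℕ → EuclideanSpace ℝ (Fin m) → Matrix (Fin N) (Fin N) ℂ)
    (hBc0 : ∀ y, Bc 0 y = 1)
    (hBcS : ∀ n y, Bc (n + 1) y =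
      B y * Bc n (ContinuousLinearMap.adjoint Q y))
    (C : EuclideanSpace ℝ (Fin m) → Matrix (Fin N) (Fin N) ℂ)
    (hC : ∀ y i j, Tendsto (fun n : ℕ => (lam ^ n)⁻¹ • Bc n y i j)
      atTop (𝓝 (C y i j))) :
    ∀ (y : EuclideanSpace ℝ (Fin m)) (i : Fin N),
      f i y = (C y).mulVec (fun j => f j 0) i ∧
      f i y = (η : ℂ) * (C y).mulVec (fun j => (v j : ℂ)) i :=
  stmt11_general T lam v hvpos B hB Q hQbij hQcontr hQdet W hWcp hIFS hdisj η hη hvol f hf Bc hBc0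
    hBcS C hC
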